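/- Let G be a k-geodetic digraph (k ≥ 2) with out-degree 2, order M(2,k)+2, and in-degree sequence (1,1,1,1,2,...,2,3,3,3,3). Then every vertex of in-degree 3 has exactly two in-neighbours of in-degree 1. -/

import Mathlib

/-- Moore bound `M(d,k) = 1 + d + ... + d^k`. -/
def moore (d k : ℕ) : ℕ := ∑ i ∈ Finset.range (k + 1), d ^ i

/-- Moore bound with integer argument, with the convention `M(d,k) = 0` for `k < 0`. -/
def mooreZ (d : ℕ) (j : ℤ) : ℕ := if j < 0 then 0 else moore d j.toNat

/-- Walks of length at most `k` from `u` to `v` in the digraph with arc relation `A`,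
encoded as vertex lists (so a walk of length `≤ k` is a list of length `≤ k+1`). -/
def walksUpTo {V : Type*} (A : V → V → Prop) (k : ℕ) (u v : V) : Set (List V) :=
  {l | l.Chain' A ∧ l.head? = some u ∧ l.getLast? = some v ∧ l.length ≤ k + 1}

/-- A digraph is `k`-geodetic if between any ordered pair of vertices there is at most
one directed walk of length at most `k`. -/
def IsGeodetic {V : Type*} (A : V → V → Prop) (k : ℕ) : Prop :=
  ∀ u v : V, (walksUpTo A k u v).Subsingleton

/-- `v` is reachable from `u` by a directed walk of length at most `k`. -/
def reachIn {V : Type*} (A : V → V → Prop) (k : ℕ) (u v : V) : Prop :=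
  (walksUpTo A k u v).Nonempty

/-- Out-degree of a vertex. -/
noncomputable def outDeg {V : Type*} (A : V → V → Prop) (u : V) : ℕ := {v | A u v}.ncard

/-- In-degree of a vertex. -/
noncomputable def inDeg {V : Type*} (A : V → V → Prop) (v : V) : ℕ := {u | A u v}.ncard

/-- The outlier set `O(u)`: vertices not reachable from `u` within distance `k`. -/
def outlier {V : Type*} (A : V → V → Prop) (k : ℕ) (u : V) : Set V :=
  {v | ¬ reachIn A k u v}
/-!
Counting walks shows that the ball of radius `k` around `x` has `2^(k+1) - 1` vertices, so
`|O(x)| = 2`. Sorting the in-neighbours of `z` by the out-neighbour of `x` through which they are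
reached gives `d⁻(z) ≤ 2 + |N⁻(z) ∩ O(x)|`, and even `d⁻(z) ≤ 1 + |N⁻(z) ∩ O(p)|` when
`z` is not reachable from the out-neighbour `x` of `p`. The first bound forces the four arcs leaving
`O(x)` to hit each of the four vertices of in-degree 3 exactly once; the second then shows that
every vertex of in-degree at least 2 is reachable from everywhere, i.e. `O(x) ⊆ S`. For `z` of
in-degree 3 the set `T ⊆ S` of its in-neighbours meets every `O(x)` in exactly one vertex, and
so does `S \ T`. As `u ∉ O(u)`, a set meeting every outlier set has at least two elements,
whence `|T| = |S \ T| = 2`.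
-/

open Classical

section Walks

variable {V : Type*} {A : V → V → Prop} {j k : ℕ} {u v w x : V} {l : List V}

lemma singleton_mem_walksUpTo (j : ℕ) (x : V) : [x] ∈ walksUpTo A j x x :=
  ⟨List.isChain_singleton _, rfl, rfl, by simp⟩

lemma walksUpTo_mono {j j' : ℕ} (h : j ≤ j') (u v : V) :
    walksUpTo A j u v ⊆ walksUpTo A j' u v :=
  fun _ hl => ⟨hl.1, hl.2.1, hl.2.2.1, hl.2.2.2.trans (by omega)⟩

lemma ne_nil_of_mem_walksUpTo (hl : l ∈ walksUpTo A j u v) : l ≠ [] := by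
  rintro rfl; simpa using hl.2.1

lemma cons_mem_walksUpTo (h : A u w) (hl : l ∈ walksUpTo A j w v) :
    u :: l ∈ walksUpTo A (j + 1) u v := by
  obtain ⟨hc, hh, hg, hlen⟩ := hl
  obtain ⟨b, t, rfl⟩ :=
    List.exists_cons_of_ne_nil (ne_nil_of_mem_walksUpTo ⟨hc, hh, hg, hlen⟩)
  obtain rfl : b = w := by simpa using hh
  refine ⟨List.isChain_cons_cons.2 ⟨h, hc⟩, rfl, ?_, by simp at hlen ⊢; omega⟩
  rwa [List.getLast?_cons_cons]

lemma append_singleton_mem_walksUpTo (hl : l ∈ walksUpTo A j u w) (h : A w v) :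
    l ++ [v] ∈ walksUpTo A (j + 1) u v := by
  obtain ⟨hc, hh, hg, hlen⟩ := hl
  have hne := ne_nil_of_mem_walksUpTo (A := A) ⟨hc, hh, hg, hlen⟩
  refine ⟨List.isChain_append.2 ⟨hc, List.isChain_singleton _, ?_⟩, ?_, by simp,
    by simp; omega⟩
  · intro a ha b hb
    simp_all
  · rwa [List.head?_append_of_ne_nil _ hne]

lemma reachIn_refl (j : ℕ) (x : V) : reachIn A j x x := ⟨[x], singleton_mem_walksUpTo j x⟩

lemma reachIn_succ_of_adj (hr : reachIn A j u w) (h : A w v) : reachIn A (j + 1) u v :=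
  let ⟨l, hl⟩ := hr; ⟨l ++ [v], append_singleton_mem_walksUpTo hl h⟩

lemma reachIn_zero_iff : reachIn A 0 x v ↔ v = x := by
  refine ⟨?_, fun h => h ▸ reachIn_refl 0 v⟩
  rintro ⟨l, -, hh, hg, hlen⟩
  match l, hlen with
  | [a], _ => simp_all

lemma reachIn_succ_iff : reachIn A (j + 1) x v ↔ v = x ∨ ∃ c, A x c ∧ reachIn A j c v := by
  constructor
  · rintro ⟨l, hc, hh, hg, hlen⟩
    match l with
    | [a] => simp_all
    | a :: b :: t =>
      obtain rfl : a = x := by simpa using hh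
      obtain ⟨hab, hc⟩ := List.isChain_cons_cons.1 hc
      refine Or.inr ⟨b, hab, b :: t, hc, rfl, ?_, by simp at hlen ⊢; omega⟩
      rwa [List.getLast?_cons_cons] at hg
  · rintro (rfl | ⟨c, hxc, l, hl⟩)
    · exact reachIn_refl _ _
    · exact ⟨x :: l, cons_mem_walksUpTo hxc hl⟩

lemma setOf_reachIn_succ {c₁ c₂ : V} (hx : {v | A x v} = {c₁, c₂}) :
    {v | reachIn A (j + 1) x v} =
      insert x ({v | reachIn A j c₁ v} ∪ {v | reachIn A j c₂ v}) := by
  ext v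
  have hc : ∀ c, A x c ↔ c = c₁ ∨ c = c₂ := fun c => Set.ext_iff.1 hx c
  simp only [Set.mem_ofPred_eq, Set.mem_insert_iff, Set.mem_union, reachIn_succ_iff, hc]
  aesop

lemma one_lt_ncard_of_forall_inter_outlier_nonempty [Finite V] [Nonempty V] {U : Set V}
    (hU : ∀ x, (U ∩ outlier A k x).Nonempty) : 1 < U.ncard := by
  obtain ⟨u, huU, -⟩ := hU (Classical.arbitrary V)
  obtain ⟨u', hu'U, hu'⟩ := hU u
  refine (Set.one_lt_ncard_iff U.toFinite).2 ⟨u, u', huU, hu'U, ?_⟩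
  rintro rfl
  exact hu' (reachIn_refl k u)

end Walks

section Geodetic

variable {V : Type*} {A : V → V → Prop} {j k : ℕ} {c c₁ c₂ w w' x z : V}

namespace IsGeodetic

lemma not_adj_of_reachIn (hgeo : IsGeodetic A k) (hj : j + 1 ≤ k) (h : reachIn A j c w) :
    ¬ A w c := by
  obtain ⟨l, hl⟩ := h
  intro hwc
  have := hgeo c c (walksUpTo_mono hj c c (append_singleton_mem_walksUpTo hl hwc))
    (singleton_mem_walksUpTo k c)
  simpa [ne_nil_of_mem_walksUpTo hl] using congrArg List.length this

lemma eq_of_adj_of_reachIn (hgeo : IsGeodetic A k) (hj : j + 1 ≤ k) (h₁ : A x c₁)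
    (h₂ : A x c₂) (r₁ : reachIn A j c₁ z) (r₂ : reachIn A j c₂ z) : c₁ = c₂ := by
  obtain ⟨l₁, hl₁⟩ := r₁
  obtain ⟨l₂, hl₂⟩ := r₂
  have he := hgeo x z (walksUpTo_mono hj x z (cons_mem_walksUpTo h₁ hl₁))
    (walksUpTo_mono hj x z (cons_mem_walksUpTo h₂ hl₂))
  have hh := hl₁.2.1
  rw [List.cons_injective he, hl₂.2.1] at hh
  exact (Option.some_injective _ hh).symm

lemma eq_of_reachIn_of_adj (hgeo : IsGeodetic A k) (hj : j + 1 ≤ k) (r : reachIn A j c w)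
    (h : A w z) (r' : reachIn A j c w') (h' : A w' z) : w = w' := by
  obtain ⟨l, hl⟩ := r
  obtain ⟨l', hl'⟩ := r'
  have he := hgeo c z (walksUpTo_mono hj c z (append_singleton_mem_walksUpTo hl h))
    (walksUpTo_mono hj c z (append_singleton_mem_walksUpTo hl' h'))
  have hg := hl.2.2.1
  rw [List.append_cancel_right he, hl'.2.2.1] at hg
  exact (Option.some_injective _ hg).symm

end IsGeodetic

end Geodetic

lemma moore_two_add_one (k : ℕ) : moore 2 k + 1 = 2 ^ (k + 1) := by
  have h := geom_sum_mul_add (1 : ℕ) (k + 1)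
  norm_num at h
  simpa [moore] using h

section Counting

variable {V : Type*} {A : V → V → Prop} {k : ℕ}

lemma exists_eq_pair_of_outDeg_eq_two {x : V} (hx : outDeg A x = 2) :
    ∃ c₁ c₂, c₁ ≠ c₂ ∧ {v | A x v} = {c₁, c₂} :=
  Set.ncard_eq_two.1 hx

namespace IsGeodetic

lemma ncard_setOf_reachIn_add_one [Finite V] (hgeo : IsGeodetic A k)
    (hout : ∀ u, outDeg A u = 2) {j : ℕ} (hj : j ≤ k) (x : V) :
    {v | reachIn A j x v}.ncard + 1 = 2 ^ (j + 1) := by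
  induction j generalizing x with
  | zero => simp [reachIn_zero_iff]
  | succ j ih =>
    obtain ⟨c₁, c₂, hne, hx⟩ := exists_eq_pair_of_outDeg_eq_two (hout x)
    have hc₁ : A x c₁ := (Set.ext_iff.1 hx c₁).2 (by simp)
    have hc₂ : A x c₂ := (Set.ext_iff.1 hx c₂).2 (by simp)
    have hdisj : Disjoint {v | reachIn A j c₁ v} {v | reachIn A j c₂ v} :=
      Set.disjoint_left.2 fun _ r₁ r₂ =>
        hne (hgeo.eq_of_adj_of_reachIn hj hc₁ hc₂ r₁ r₂)
    have hx_notMem : x ∉ {v | reachIn A j c₁ v} ∪ {v | reachIn A j c₂ v} := by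
      rintro (r | r)
      · exact hgeo.not_adj_of_reachIn hj r hc₁
      · exact hgeo.not_adj_of_reachIn hj r hc₂
    rw [setOf_reachIn_succ hx, Set.ncard_insert_of_notMem hx_notMem,
      Set.ncard_union_eq hdisj, pow_succ]
    have := ih (by omega) c₁
    have := ih (by omega) c₂
    omega

lemma ncard_outlier [Fintype V] (hgeo : IsGeodetic A k) (hout : ∀ u, outDeg A u = 2)
    (hcard : Fintype.card V = moore 2 k + 2) (x : V) : (outlier A k x).ncard = 2 := by
  have hball := hgeo.ncard_setOf_reachIn_add_one hout le_rfl x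
  have hsum := Set.ncard_add_ncard_compl {v | reachIn A k x v}
  rw [Nat.card_eq_fintype_card, hcard] at hsum
  have := moore_two_add_one k
  change {v | reachIn A k x v}ᶜ.ncard = 2
  omega

end IsGeodetic

end Counting

section InDegree

variable {V : Type*} {A : V → V → Prop} {m : ℕ} {x : V}

namespace IsGeodetic

lemma inDeg_le [Finite V] (hgeo : IsGeodetic A (m + 1)) {c₁ c₂ : V}
    (hx : {v | A x v} = {c₁, c₂}) (z : V) :
    inDeg A z ≤ (if reachIn A (m + 1) c₁ z then 1 else 0)
      + (if reachIn A (m + 1) c₂ z then 1 else 0)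
      + ({w | A w z} ∩ outlier A (m + 1) x).ncard := by
  -- `R c`: the in-neighbours of `z` reached from `x` through its out-neighbour `c`
  let R : V → Set V := fun c => {w | A w z ∧ (w = x ∧ z = c ∨ reachIn A m c w)}
  have hR : ∀ c, A x c → (R c).ncard ≤ if reachIn A (m + 1) c z then 1 else 0 := by
    intro c hxc
    split_ifs with hcz
    · refine Set.ncard_le_one_iff_subsingleton.2 ?_
      rintro w ⟨hwz, (⟨rfl, rfl⟩ | hw)⟩ w' ⟨hw'z, (⟨rfl, hzc⟩ | hw')⟩
      · rfl
      · exact (hgeo.not_adj_of_reachIn le_rfl hw' hw'z).elim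
      · exact (hgeo.not_adj_of_reachIn le_rfl hw (hzc ▸ hwz)).elim
      · exact hgeo.eq_of_reachIn_of_adj le_rfl hw hwz hw' hw'z
    · suffices R c = ∅ by rw [this, Set.ncard_empty]
      refine Set.eq_empty_of_forall_notMem ?_
      rintro w ⟨hwz, (⟨-, rfl⟩ | hw)⟩
      · exact hcz (reachIn_refl _ _)
      · exact hcz (reachIn_succ_of_adj hw hwz)
  have hsub : {w | A w z} \ outlier A (m + 1) x ⊆ R c₁ ∪ R c₂ := by
    rintro w ⟨hwz, hw⟩
    have hc : ∀ c, A x c ↔ c = c₁ ∨ c = c₂ := fun c => Set.ext_iff.1 hx c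
    rcases reachIn_succ_iff.1 (not_not.1 hw) with rfl | ⟨c, hwc, hcw⟩
    · rcases (hc z).1 hwz with rfl | rfl
      exacts [Or.inl ⟨hwz, Or.inl ⟨rfl, rfl⟩⟩, Or.inr ⟨hwz, Or.inl ⟨rfl, rfl⟩⟩]
    · rcases (hc c).1 hwc with rfl | rfl
      exacts [Or.inl ⟨hwz, Or.inr hcw⟩, Or.inr ⟨hwz, Or.inr hcw⟩]
  have hsplit := Set.ncard_inter_add_ncard_sdiff_eq_ncard {w | A w z} (outlier A (m + 1) x)
  have hunion := (Set.ncard_le_ncard hsub).trans (Set.ncard_union_le (R c₁) (R c₂))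
  have h₁ := hR c₁ ((Set.ext_iff.1 hx c₁).2 (by simp))
  have h₂ := hR c₂ ((Set.ext_iff.1 hx c₂).2 (by simp))
  unfold inDeg
  omega

lemma inDeg_le_two_add [Finite V] (hgeo : IsGeodetic A (m + 1)) (hx : outDeg A x = 2) (z : V) :
    inDeg A z ≤ 2 + ({w | A w z} ∩ outlier A (m + 1) x).ncard := by
  obtain ⟨c₁, c₂, -, hx⟩ := exists_eq_pair_of_outDeg_eq_two hx
  have := hgeo.inDeg_le hx z
  split_ifs at this <;> omega

lemma inDeg_le_one_add_of_not_reachIn [Finite V] (hgeo : IsGeodetic A (m + 1)) {p z : V}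
    (hp : outDeg A p = 2) (hpx : A p x) (hxz : ¬ reachIn A (m + 1) x z) :
    inDeg A z ≤ 1 + ({w | A w z} ∩ outlier A (m + 1) p).ncard := by
  obtain ⟨c₁, c₂, -, hp⟩ := exists_eq_pair_of_outDeg_eq_two hp
  have := hgeo.inDeg_le hp z
  rcases (Set.ext_iff.1 hp x).1 hpx with rfl | rfl <;> split_ifs at this <;> omega

end IsGeodetic

end InDegree

lemma sum_ncard_setOf_adj_inter {V : Type*} [Fintype V] (A : V → V → Prop) (S : Set V) :
    ∑ z, ({w | A w z} ∩ S).ncard = ∑ w ∈ S.toFinset, outDeg A w := by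
  have hin : ∀ z, ({w | A w z} ∩ S).ncard = (S.toFinset.bipartiteBelow A z).card := by
    intro z
    rw [Set.ncard_eq_toFinset_card']
    congr 1
    ext w
    simp [Finset.bipartiteBelow, and_comm]
  have hout : ∀ w, outDeg A w = (Finset.univ.bipartiteAbove A w).card := by
    intro w
    rw [outDeg, Set.ncard_eq_toFinset_card']
    congr 1
    ext v
    simp [Finset.bipartiteAbove]
  simp only [hin, hout]
  exact (Finset.sum_card_bipartiteAbove_eq_sum_card_bipartiteBelow A).symm

lemma eq_ite_of_sum_le_ncard {V : Type*} [Fintype V] (f : V → ℕ) (p : V → Prop)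
    [DecidablePred p] (hp : ∀ z, p z → 1 ≤ f z) (hsum : ∑ z, f z ≤ {z | p z}.ncard)
    (z : V) : f z = if p z then 1 else 0 := by
  set g : V → ℕ := fun z => if p z then 1 else 0 with hg
  have hgf : ∀ z, g z ≤ f z := fun z => by
    by_cases hz : p z <;> simp [hg, hz, hp]
  have hsum_g : ∑ z, g z = {z | p z}.ncard := by
    rw [Finset.sum_boole, Set.ncard_eq_toFinset_card']
    simp
  have hzero : ∑ z, (f z - g z) = 0 := by
    rw [Finset.sum_tsub_distrib _ fun z _ => hgf z]
    omega
  exact le_antisymm (Nat.sub_eq_zero_iff_le.1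
    (Finset.sum_eq_zero_iff.1 hzero z (Finset.mem_univ z))) (hgf z)

section AlmostMoore

variable {V : Type*} [Fintype V] {A : V → V → Prop} {m : ℕ}

lemma ncard_setOf_adj_inter_outlier (hgeo : IsGeodetic A (m + 1)) (hout : ∀ u, outDeg A u = 2)
    (hcard : Fintype.card V = moore 2 (m + 1) + 2) (h3 : {v | inDeg A v = 3}.ncard = 4)
    (x z : V) :
    ({w | A w z} ∩ outlier A (m + 1) x).ncard = if inDeg A z = 3 then 1 else 0 := by
  refine eq_ite_of_sum_le_ncard (fun z => ({w | A w z} ∩ outlier A (m + 1) x).ncard)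
    (inDeg A · = 3) (fun z hz => ?_) ?_ z
  · have := hgeo.inDeg_le_two_add (hout x) z
    rw [hz] at this
    omega
  · rw [sum_ncard_setOf_adj_inter, Finset.sum_congr rfl fun w _ => hout w, Finset.sum_const,
      ← Set.ncard_eq_toFinset_card', hgeo.ncard_outlier hout hcard, h3, smul_eq_mul]

lemma reachIn_of_two_le_inDeg (hgeo : IsGeodetic A (m + 1)) (hout : ∀ u, outDeg A u = 2)
    (hcard : Fintype.card V = moore 2 (m + 1) + 2) (h3 : {v | inDeg A v = 3}.ncard = 4)
    {x z : V} (hx : inDeg A x ≠ 0) (hz : 2 ≤ inDeg A z) : reachIn A (m + 1) x z := by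
  by_contra hxz
  obtain ⟨p, hpx⟩ := Set.nonempty_of_ncard_ne_zero hx
  have := hgeo.inDeg_le_one_add_of_not_reachIn (hout p) hpx hxz
  rw [ncard_setOf_adj_inter_outlier hgeo hout hcard h3] at this
  split_ifs at this <;> omega

lemma outlier_subset_setOf_inDeg_eq_one (hgeo : IsGeodetic A (m + 1))
    (hout : ∀ u, outDeg A u = 2) (hcard : Fintype.card V = moore 2 (m + 1) + 2)
    (h3 : {v | inDeg A v = 3}.ncard = 4) (hall : ∀ v, inDeg A v = 1 ∨ inDeg A v = 2 ∨ inDeg A v = 3)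
    (x : V) : outlier A (m + 1) x ⊆ {v | inDeg A v = 1} := by
  intro w hw
  by_contra hw1
  have hw2 : 2 ≤ inDeg A w := by have : inDeg A w ≠ 1 := hw1; have := hall w; omega
  exact hw (reachIn_of_two_le_inDeg hgeo hout hcard h3 (by have := hall x; omega) hw2)

end AlmostMoore

/-- Let `G` be a `k`-geodetic digraph (`k ≥ 2`) with out-degree 2, order
`M(2,k)+2`, and in-degree sequence `(1,1,1,1,2,…,2,3,3,3,3)`.  Then every vertex of
in-degree 3 has exactly two in-neighbours of in-degree 1. -/
theorem stmt17 {V : Type*} [Fintype V] (A : V → V → Prop) (k : ℕ) (hk : 2 ≤ k)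
    (hgeo : IsGeodetic A k) (hout : ∀ u : V, outDeg A u = 2)
    (hcard : Fintype.card V = moore 2 k + 2)
    (h1 : {v : V | inDeg A v = 1}.ncard = 4)
    (h3 : {v : V | inDeg A v = 3}.ncard = 4)
    (hall : ∀ v : V, inDeg A v = 1 ∨ inDeg A v = 2 ∨ inDeg A v = 3) :
    ∀ v' : V, inDeg A v' = 3 → {v : V | inDeg A v = 1 ∧ A v v'}.ncard = 2 := by
  intro z hz
  obtain ⟨m, rfl⟩ : ∃ m, k = m + 1 := ⟨k - 1, by omega⟩
  have : Nonempty V := Fintype.card_pos_iff.1 (by rw [hcard]; omega)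
  set S := {v : V | inDeg A v = 1}
  set T := {v : V | inDeg A v = 1 ∧ A v z}
  have hOS := outlier_subset_setOf_inDeg_eq_one hgeo hout hcard h3 hall
  have hT : ∀ x, (T ∩ outlier A (m + 1) x).ncard = 1 := fun x => by
    have := ncard_setOf_adj_inter_outlier hgeo hout hcard h3 x z
    rw [if_pos hz] at this
    refine (congrArg Set.ncard (Set.ext fun w => ?_)).trans this
    exact ⟨fun ⟨⟨_, hwz⟩, hw⟩ => ⟨hwz, hw⟩, fun ⟨hwz, hw⟩ => ⟨⟨hOS x hw, hwz⟩, hw⟩⟩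
  have hST : ∀ x, ((S \ T) ∩ outlier A (m + 1) x).ncard = 1 := fun x => by
    have hsplit := Set.ncard_inter_add_ncard_sdiff_eq_ncard (outlier A (m + 1) x) T
    rw [hgeo.ncard_outlier hout hcard, Set.inter_comm, hT x] at hsplit
    rw [Set.inter_comm, ← Set.inter_sdiff_assoc, Set.inter_eq_left.2 (hOS x)]
    omega
  have hT2 := one_lt_ncard_of_forall_inter_outlier_nonempty
    fun x => Set.nonempty_of_ncard_ne_zero (by rw [hT x]; omega)
  have hST2 := one_lt_ncard_of_forall_inter_outlier_nonempty
    fun x => Set.nonempty_of_ncard_ne_zero (by rw [hST x]; omega)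
  have := Set.ncard_sdiff_add_ncard_of_subset (show T ⊆ S from fun _ hv => hv.1)
  omega
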